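/- Suppose A1 holds, ψ is twice differentiable, and F = f + ψ. Under the same hypotheses as in the zeroth-order block lemma (σ ≥ 2⁴·(2/3)^{1/3}·m·L; ‖B − ∇²f(x₀)‖ ≤ (2nL/3)·h with 0 < h ≤ [3⁴σ^{3/2}ε^{3/2}/(2^{14}·192·n³L³)]^{1/3}; ‖g_t − ∇f(x_t)‖ ≤ (√n·L/6)·h_g² with h_g = 3^{−1/3}[εm/(σn^{1/2})]^{1/2}; and each x_{t+1} satisfying M_{x_t,σ}(x_{t+1}) + ψ(x_{t+1}) ≤ F(x_t) and ‖∇M_{x_t,σ}(x_{t+1}) + ψ'(x_{t+1})‖ ≤ (σ/4)‖x_{t+1} − x_t‖², with g = g_t and the same B in the model), assume additionally that each x_{t+1} satisfies B + σ‖x_{t+1} − x_t‖·I + ∇²ψ(x_{t+1}) ⪰ 0. Then either min_{1 ≤ t ≤ m} max{ ‖∇f(x_t) + ψ'(x_t)‖, (1/σ)·(2/3)^{10/3}·ξ(x_t)² } ≤ ε, or F(x₀) − F(x_m) ≥ m·ε^{3/2}/(2·192·σ^{1/2}). -/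

import Mathlib

/-!
Write `r t = ‖x (t + 1) - x t‖` and `R = (9/128)^(1/3) √(ε/σ)`. Comparing the cubic model with
the third-order Taylor bound of `f` (Lipschitz Hessian), step `t` decreases `F` by at least
`(σ - L)/6 · r t³` minus error terms linear and quadratic in `r t`, where the Hessian error
`‖∇²f(x t) - B‖` exceeds `‖∇²f(x 0) - B‖` by at most `L · ∑_{i<t} r i`.

If `∑ r t³ ≥ m R³`, AM-GM and Chebyshev's sum inequality absorb all error terms, leaving a decrease
of `σ/27 · ∑ r t³ ≥ σ/27 · m R³ = m ε^(3/2) / (384 √σ)`. Otherwise some step is shorter than `R`,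
while by the power-mean inequality the whole block has length at most `m R`; the inexact
stationarity and semidefiniteness conditions of that step then bound the gradient by `σ R²` and
the negative curvature by `2 σ R`, which gives the first alternative.
-/

open RealInnerProductSpace

/-- `negEigPart F y` is ξ(y) = max{−λ_min(∇²F(y)), 0}, defined as the least `c ≥ 0` such
that `∇²F(y) ⪰ −c·I`. -/
noncomputable def negEigPart {n : ℕ} (F : EuclideanSpace ℝ (Fin n) → ℝ)
    (y : EuclideanSpace ℝ (Fin n)) : ℝ :=
  sInf {c : ℝ | 0 ≤ c ∧ ∀ v : EuclideanSpace ℝ (Fin n),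
    -(c * ‖v‖ ^ 2) ≤ ⟪fderiv ℝ (gradient F) y v, v⟫}

open Set

lemma norm_le_div_succ_of_norm_deriv_le_pow {G : Type*} [NormedAddCommGroup G] [NormedSpace ℝ G]
    {φ φ' : ℝ → G} {C : ℝ} (k : ℕ) (hφ : ∀ t, HasDerivAt φ (φ' t) t) (h0 : φ 0 = 0)
    (hbound : ∀ t ∈ Ico (0 : ℝ) 1, ‖φ' t‖ ≤ C * t ^ k) : ‖φ 1‖ ≤ C / (k + 1) := by
  have hB : ∀ t : ℝ, HasDerivAt (fun t => C / (k + 1) * t ^ (k + 1)) (C * t ^ k) t := by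
    intro t
    refine ((hasDerivAt_pow (k + 1) t).const_mul (C / (k + 1))).congr_deriv ?_
    rw [Nat.add_sub_cancel]
    push_cast
    field_simp
  simpa using image_norm_le_of_norm_deriv_right_le_deriv_boundary
    (fun t _ => (hφ t).continuousAt.continuousWithinAt) (fun t _ => (hφ t).hasDerivWithinAt)
    (by simp [h0]) hB hbound (right_mem_Icc.2 zero_le_one)

section Taylor

variable {E : Type*} [NormedAddCommGroup E] [InnerProductSpace ℝ E]

lemma ContinuousLinearMap.abs_inner_apply_self_le (A : E →L[ℝ] E) (v : E) :
    |⟪A v, v⟫| ≤ ‖A‖ * ‖v‖ ^ 2 :=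
  calc |⟪A v, v⟫| ≤ ‖A v‖ * ‖v‖ := abs_real_inner_le_norm _ _
    _ ≤ ‖A‖ * ‖v‖ * ‖v‖ := by gcongr; exact A.le_opNorm v
    _ = ‖A‖ * ‖v‖ ^ 2 := by ring

variable [CompleteSpace E]

lemma ContDiff.differentiable_gradient {f : E → ℝ} (hf : ContDiff ℝ 2 f) :
    Differentiable ℝ (gradient f) :=
  (InnerProductSpace.toDual ℝ E).symm.differentiable.comp
    ((hf.fderiv_right (m := 1) (by norm_num)).differentiable one_ne_zero)

lemma fderiv_gradient_add {f ψ : E → ℝ} (hf : ContDiff ℝ 2 f) (hψ : ContDiff ℝ 2 ψ) (y : E) :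
    fderiv ℝ (gradient fun z => f z + ψ z) y
      = fderiv ℝ (gradient f) y + fderiv ℝ (gradient ψ) y := by
  have hsum : (gradient fun z => f z + ψ z) = fun z => gradient f z + gradient ψ z := by
    funext z
    simp only [gradient]
    rw [fderiv_fun_add (hf.differentiable two_ne_zero z) (hψ.differentiable two_ne_zero z),
      map_add]
  rw [hsum, fderiv_fun_add (hf.differentiable_gradient y) (hψ.differentiable_gradient y)]

def HessianLipschitzWith (L : ℝ) (f : E → ℝ) : Prop :=
  ∀ u v, ‖fderiv ℝ (gradient f) v - fderiv ℝ (gradient f) u‖ ≤ L * ‖v - u‖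

namespace HessianLipschitzWith

variable {f : E → ℝ} {L : ℝ}

theorem norm_gradient_sub_sub_le (hLip : HessianLipschitzWith L f) (hf : ContDiff ℝ 2 f)
    (x y : E) :
    ‖gradient f y - gradient f x - fderiv ℝ (gradient f) x (y - x)‖ ≤ L / 2 * ‖y - x‖ ^ 2 := by
  set H := fderiv ℝ (gradient f)
  set v := y - x
  have hφ : ∀ t : ℝ, HasDerivAt (fun t : ℝ => gradient f (x + t • v) - gradient f x - t • H x v)
      (H (x + t • v) v - H x v) t := by
    intro t
    have hline : HasDerivAt (fun t : ℝ => x + t • v) v t := by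
      simpa using ((hasDerivAt_id t).smul_const v).const_add x
    have := (hf.differentiable_gradient _).hasFDerivAt.comp_hasDerivAt t hline
    refine ((this.sub_const (gradient f x)).fun_sub
      ((hasDerivAt_id' t).smul_const (H x v))).congr_deriv ?_
    rw [one_smul]
  have hbound : ∀ t ∈ Ico (0 : ℝ) 1, ‖H (x + t • v) v - H x v‖ ≤ L * ‖v‖ ^ 2 * t ^ 1 := by
    intro t ht
    calc ‖H (x + t • v) v - H x v‖ = ‖(H (x + t • v) - H x) v‖ := rfl
      _ ≤ L * ‖x + t • v - x‖ * ‖v‖ :=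
        ((H (x + t • v) - H x).le_opNorm v).trans (by gcongr; exact hLip x _)
      _ = L * ‖v‖ ^ 2 * t ^ 1 := by
        rw [add_sub_cancel_left, norm_smul, Real.norm_of_nonneg ht.1]; ring
  have := norm_le_div_succ_of_norm_deriv_le_pow 1 hφ (by simp) hbound
  simp only [one_smul] at this
  rw [add_sub_cancel x y] at this
  push_cast at this
  linarith

theorem le_taylor_add_cube (hLip : HessianLipschitzWith L f) (hf : ContDiff ℝ 2 f) (x y : E) :
    f y ≤ f x + ⟪gradient f x, y - x⟫ + 1 / 2 * ⟪fderiv ℝ (gradient f) x (y - x), y - x⟫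
      + L / 6 * ‖y - x‖ ^ 3 := by
  set H := fderiv ℝ (gradient f)
  set v := y - x
  have hφ : ∀ t : ℝ, HasDerivAt
      (fun t : ℝ => f (x + t • v) - f x - t * ⟪gradient f x, v⟫ - t ^ 2 / 2 * ⟪H x v, v⟫)
      ⟪gradient f (x + t • v) - gradient f x - H x (x + t • v - x), v⟫ t := by
    intro t
    have hline : HasDerivAt (fun t : ℝ => x + t • v) v t := by
      simpa using ((hasDerivAt_id t).smul_const v).const_add x
    have hfc := ((hf.differentiable two_ne_zero _).hasFDerivAt.comp_hasDerivAt t hline)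
    refine (((hfc.sub_const (f x)).fun_sub ((hasDerivAt_id' t).mul_const ⟪gradient f x, v⟫)).fun_sub
      (((hasDerivAt_pow 2 t).div_const 2).mul_const ⟪H x v, v⟫)).congr_deriv ?_
    simp only [add_sub_cancel_left, map_smul, inner_sub_left, real_inner_smul_left,
      inner_gradient_left]
    norm_num
  have hbound : ∀ t ∈ Ico (0 : ℝ) 1,
      ‖⟪gradient f (x + t • v) - gradient f x - H x (x + t • v - x), v⟫‖
        ≤ L / 2 * ‖v‖ ^ 3 * t ^ 2 := by
    intro t ht
    calc _ ≤ ‖gradient f (x + t • v) - gradient f x - H x (x + t • v - x)‖ * ‖v‖ :=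
          abs_real_inner_le_norm _ _
      _ ≤ L / 2 * ‖x + t • v - x‖ ^ 2 * ‖v‖ := by
          gcongr; exact hLip.norm_gradient_sub_sub_le hf x _
      _ = L / 2 * ‖v‖ ^ 3 * t ^ 2 := by
        rw [add_sub_cancel_left, norm_smul, Real.norm_of_nonneg ht.1]; ring
  have := norm_le_div_succ_of_norm_deriv_le_pow 2 hφ (by simp) hbound
  simp only [one_smul, one_mul, one_pow, Real.norm_eq_abs] at this
  rw [add_sub_cancel x y] at this
  push_cast at this
  linarith [le_abs_self (f y - f x - ⟪gradient f x, v⟫ - 1 / 2 * ⟪H x v, v⟫)]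

end HessianLipschitzWith

end Taylor

section CubicStep

variable {E : Type*} [NormedAddCommGroup E] [InnerProductSpace ℝ E] [CompleteSpace E]
  {f ψ : E → ℝ} {L σ : ℝ} {a b g w : E} {B : E →L[ℝ] E}

namespace HessianLipschitzWith

theorem sub_le_of_cubic_model_le (hLip : HessianLipschitzWith L f) (hf : ContDiff ℝ 2 f)
    {ψa ψb : ℝ}
    (hdec : f a + ⟪g, b - a⟫ + 1 / 2 * ⟪B (b - a), b - a⟫ + σ / 6 * ‖b - a‖ ^ 3 + ψb
      ≤ f a + ψa) :
    (σ - L) / 6 * ‖b - a‖ ^ 3 - ‖g - gradient f a‖ * ‖b - a‖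
      - ‖fderiv ℝ (gradient f) a - B‖ / 2 * ‖b - a‖ ^ 2 ≤ (f a + ψa) - (f b + ψb) := by
  have htaylor := hLip.le_taylor_add_cube hf a b
  have hg : ⟪gradient f a - g, b - a⟫ ≤ ‖g - gradient f a‖ * ‖b - a‖ :=
    norm_sub_rev g _ ▸ real_inner_le_norm _ _
  have hB : ⟪(fderiv ℝ (gradient f) a - B) (b - a), b - a⟫
      ≤ ‖fderiv ℝ (gradient f) a - B‖ * ‖b - a‖ ^ 2 :=
    (le_abs_self _).trans (ContinuousLinearMap.abs_inner_apply_self_le _ _)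
  rw [inner_sub_left] at hg
  rw [sub_apply, inner_sub_left] at hB
  linarith

theorem norm_gradient_add_le_of_cubic_model (hLip : HessianLipschitzWith L f)
    (hf : ContDiff ℝ 2 f) (hσ : 0 ≤ σ)
    (hmodel : ‖g + B (b - a) + (σ / 2 * ‖b - a‖) • (b - a) + w‖ ≤ σ / 4 * ‖b - a‖ ^ 2) :
    ‖gradient f b + w‖ ≤ (L / 2 + 3 * σ / 4) * ‖b - a‖ ^ 2 + ‖g - gradient f a‖
      + ‖fderiv ℝ (gradient f) a - B‖ * ‖b - a‖ := by
  set H := fderiv ℝ (gradient f) a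
  set T := gradient f b - gradient f a - H (b - a)
  set D := (H - B) (b - a)
  set S := (σ / 2 * ‖b - a‖) • (b - a)
  set M := g + B (b - a) + S + w
  have hsplit : gradient f b + w = T - (g - gradient f a) + D + M - S := by
    simp only [T, D, M, sub_apply]
    abel
  have hT : ‖T‖ ≤ L / 2 * ‖b - a‖ ^ 2 := hLip.norm_gradient_sub_sub_le hf a b
  have hD : ‖D‖ ≤ ‖H - B‖ * ‖b - a‖ := (H - B).le_opNorm (b - a)
  have hS : ‖S‖ = σ / 2 * ‖b - a‖ ^ 2 := by
    rw [norm_smul, Real.norm_of_nonneg (by positivity : 0 ≤ σ / 2 * ‖b - a‖)]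
    ring
  rw [hsplit]
  linarith [norm_sub_le (T - (g - gradient f a) + D + M) S,
    norm_add_le (T - (g - gradient f a) + D) M, norm_add_le (T - (g - gradient f a)) D, norm_sub_le T (g - gradient f a)]

theorem neg_le_inner_fderiv_gradient_add (hLip : HessianLipschitzWith L f)
    (hf : ContDiff ℝ 2 f) (hψ : ContDiff ℝ 2 ψ)
    (hPSD : ∀ v, 0 ≤ ⟪B v, v⟫ + σ * ‖b - a‖ * ‖v‖ ^ 2 + ⟪fderiv ℝ (gradient ψ) b v, v⟫)
    (v : E) :
    -(((σ + L) * ‖b - a‖ + ‖fderiv ℝ (gradient f) a - B‖) * ‖v‖ ^ 2)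
      ≤ ⟪fderiv ℝ (gradient fun y => f y + ψ y) b v, v⟫ := by
  have hba := abs_le.1
    ((fderiv ℝ (gradient f) b - fderiv ℝ (gradient f) a).abs_inner_apply_self_le v)
  have hab := abs_le.1 ((fderiv ℝ (gradient f) a - B).abs_inner_apply_self_le v)
  have hLv := mul_le_mul_of_nonneg_right (hLip a b) (sq_nonneg ‖v‖)
  rw [sub_apply, inner_sub_left] at hba hab
  rw [fderiv_gradient_add hf hψ, add_apply, inner_add_left]
  linarith [hPSD v]

end HessianLipschitzWith

end CubicStep

section Sums

open Finset

variable {ι : Type*} (s : Finset ι) {r : ι → ℝ} {R : ℝ}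

lemma sq_mul_sum_le_sum_pow_three (hr : ∀ i ∈ s, 0 ≤ r i) (hR : 0 ≤ R)
    (hX : #s * R ^ 3 ≤ ∑ i ∈ s, r i ^ 3) : R ^ 2 * ∑ i ∈ s, r i ≤ ∑ i ∈ s, r i ^ 3 := by
  have amgm : ∀ i ∈ s, 3 * R ^ 2 * r i ≤ r i ^ 3 + 2 * R ^ 3 := fun i hi => by
    nlinarith [mul_nonneg (sq_nonneg (r i - R)) (add_nonneg (hr i hi) (mul_nonneg zero_le_two hR))]
  have := sum_le_sum amgm
  rw [← mul_sum, sum_add_distrib, ← mul_sum, sum_const, nsmul_eq_mul] at this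
  linarith

lemma mul_sum_sq_le_sum_pow_three (hr : ∀ i ∈ s, 0 ≤ r i) (hR : 0 ≤ R)
    (hX : #s * R ^ 3 ≤ ∑ i ∈ s, r i ^ 3) : R * ∑ i ∈ s, r i ^ 2 ≤ ∑ i ∈ s, r i ^ 3 := by
  have amgm : ∀ i ∈ s, 3 * R * r i ^ 2 ≤ 2 * r i ^ 3 + R ^ 3 := fun i hi => by
    nlinarith [mul_nonneg (sq_nonneg (r i - R)) (add_nonneg (mul_nonneg zero_le_two (hr i hi)) hR)]
  have := sum_le_sum amgm
  rw [← mul_sum, sum_add_distrib, ← mul_sum, sum_const, nsmul_eq_mul] at this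
  linarith

end Sums

open Finset in
theorem le_sum_cubic_decrease {r : ℕ → ℝ} {m : ℕ} {σ L δg δB R : ℝ} (hr : ∀ i, 0 ≤ r i)
    (hL : 0 ≤ L) (hm : 1 ≤ m) (hσ : 12 * (m * L) ≤ σ) (hR : 0 ≤ R)
    (hδg : δg ≤ σ * R ^ 2 / 27) (hδB : δB ≤ 2 * σ * R / 27)
    (hX : m * R ^ 3 ≤ ∑ t ∈ range m, r t ^ 3) :
    σ / 27 * (m * R ^ 3) ≤ ∑ t ∈ range m, ((σ - L) / 6 * r t ^ 3 - δg * r t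
      - (δB + L * ∑ i ∈ range t, r i) / 2 * r t ^ 2) := by
  set S1 := ∑ t ∈ range m, r t
  set S2 := ∑ t ∈ range m, r t ^ 2
  set X := ∑ t ∈ range m, r t ^ 3
  have hX' : #(range m) * R ^ 3 ≤ X := by rwa [card_range]
  have hS1 : R ^ 2 * S1 ≤ X := sq_mul_sum_le_sum_pow_three _ (fun i _ => hr i) hR hX'
  have hS2 : R * S2 ≤ X := mul_sum_sq_le_sum_pow_three _ (fun i _ => hr i) hR hX'
  have hcheb : S2 * S1 ≤ m * X := by
    simpa [← pow_succ] using ((monovaryOn_self r (Finset.range m)).pow_left₀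
      (fun i _ => hr i) 2).sum_mul_sum_le_card_mul_sum
  have hterm : ∀ t ∈ range m, (σ - L) / 6 * r t ^ 3 - δg * r t - δB / 2 * r t ^ 2
      - L / 2 * S1 * r t ^ 2 ≤ (σ - L) / 6 * r t ^ 3 - δg * r t
        - (δB + L * ∑ i ∈ range t, r i) / 2 * r t ^ 2 := fun t ht => by
    have : ∑ i ∈ range t, r i ≤ S1 := sum_le_sum_of_subset_of_nonneg
      (range_subset_range.2 (mem_range.1 ht).le) fun i _ _ => hr i
    nlinarith [mul_le_mul_of_nonneg_right (mul_le_mul_of_nonneg_left this hL) (sq_nonneg (r t))]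
  refine le_trans ?_ (sum_le_sum hterm)
  simp only [sum_sub_distrib, ← mul_sum]
  have hσ0 : 0 ≤ σ := le_trans (by positivity) hσ
  have hS10 : 0 ≤ S1 := sum_nonneg fun i _ => hr i
  have hS20 : 0 ≤ S2 := sum_nonneg fun i _ => sq_nonneg (r i)
  have hLm : L ≤ m * L := le_mul_of_one_le_left hL (by exact_mod_cast hm)
  nlinarith [mul_le_mul_of_nonneg_right hδg hS10, mul_le_mul_of_nonneg_right hδB hS20,
    mul_le_mul_of_nonneg_left hcheb hL, mul_le_mul_of_nonneg_left hX hσ0,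
    mul_le_mul_of_nonneg_right hLm (le_trans (by positivity) hX),
    mul_le_mul_of_nonneg_right hσ (le_trans (by positivity) hX)]

section Block

open Finset

variable {E : Type*} [NormedAddCommGroup E] [InnerProductSpace ℝ E] [CompleteSpace E]
  {f ψ : E → ℝ} {L σ δg δB R : ℝ} {m : ℕ} {x g ψ' : ℕ → E} {B : E →L[ℝ] E}

namespace HessianLipschitzWith

theorem norm_fderiv_gradient_sub_le (hLip : HessianLipschitzWith L f) (hL : 0 ≤ L) (t : ℕ) :
    ‖fderiv ℝ (gradient f) (x t) - B‖
      ≤ ‖B - fderiv ℝ (gradient f) (x 0)‖ + L * ∑ i ∈ range t, ‖x (i + 1) - x i‖ := by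
  have hdist : ‖x t - x 0‖ ≤ ∑ i ∈ range t, ‖x (i + 1) - x i‖ := by
    rw [← sum_range_sub x t]
    exact norm_sum_le _ _
  calc ‖fderiv ℝ (gradient f) (x t) - B‖
      = ‖(fderiv ℝ (gradient f) (x t) - fderiv ℝ (gradient f) (x 0))
          + (fderiv ℝ (gradient f) (x 0) - B)‖ := by rw [sub_add_sub_cancel]
    _ ≤ L * ‖x t - x 0‖ + ‖B - fderiv ℝ (gradient f) (x 0)‖ :=
      (norm_add_le _ _).trans (add_le_add (hLip _ _) (norm_sub_rev _ _).le)
    _ ≤ _ := by linarith [mul_le_mul_of_nonneg_left hdist hL]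

theorem cubic_newton_block (hLip : HessianLipschitzWith L f) (hf : ContDiff ℝ 2 f)
    (hψ : ContDiff ℝ 2 ψ) (hL : 0 ≤ L) (hm : 1 ≤ m) (hσ : 12 * (m * L) ≤ σ) (hR : 0 ≤ R)
    (hδg : δg ≤ σ * R ^ 2 / 27) (hδB : δB ≤ 2 * σ * R / 27)
    (hB : ‖B - fderiv ℝ (gradient f) (x 0)‖ ≤ δB)
    (hg : ∀ t < m, ‖g t - gradient f (x t)‖ ≤ δg)
    (hdec : ∀ t < m, f (x t) + ⟪g t, x (t + 1) - x t⟫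
        + 1 / 2 * ⟪B (x (t + 1) - x t), x (t + 1) - x t⟫
        + σ / 6 * ‖x (t + 1) - x t‖ ^ 3 + ψ (x (t + 1)) ≤ f (x t) + ψ (x t))
    (hmodel : ∀ t < m, ‖g t + B (x (t + 1) - x t)
        + (σ / 2 * ‖x (t + 1) - x t‖) • (x (t + 1) - x t) + ψ' (t + 1)‖
        ≤ σ / 4 * ‖x (t + 1) - x t‖ ^ 2)
    (hPSD : ∀ t < m, ∀ v, 0 ≤ ⟪B v, v⟫ + σ * ‖x (t + 1) - x t‖ * ‖v‖ ^ 2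
        + ⟪fderiv ℝ (gradient ψ) (x (t + 1)) v, v⟫) :
    (∃ t, 1 ≤ t ∧ t ≤ m ∧ ‖gradient f (x t) + ψ' t‖ ≤ σ * R ^ 2 ∧
        ∀ v, -(2 * σ * R * ‖v‖ ^ 2) ≤ ⟪fderiv ℝ (gradient fun y => f y + ψ y) (x t) v, v⟫) ∨
      σ / 27 * (m * R ^ 3) ≤ (f (x 0) + ψ (x 0)) - (f (x m) + ψ (x m)) := by
  set r := fun t => ‖x (t + 1) - x t‖
  have hr : ∀ t, 0 ≤ r t := fun t => norm_nonneg _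
  have hH : ∀ t, ‖fderiv ℝ (gradient f) (x t) - B‖ ≤ δB + L * ∑ i ∈ range t, r i := fun t =>
    (hLip.norm_fderiv_gradient_sub_le hL t).trans (by linarith)
  rcases le_or_gt (m * R ^ 3) (∑ t ∈ range m, r t ^ 3) with hX | hX
  · right
    rw [← sum_range_sub' (fun t => f (x t) + ψ (x t))]
    refine (le_sum_cubic_decrease hr hL hm hσ hR hδg hδB hX).trans (sum_le_sum fun t ht => ?_)
    have ht := mem_range.1 ht
    refine le_trans ?_ (hLip.sub_le_of_cubic_model_le hf (hdec t ht))
    nlinarith [mul_le_mul_of_nonneg_right (hg t ht) (hr t),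
      mul_le_mul_of_nonneg_right (hH t) (sq_nonneg (r t))]
  · left
    obtain ⟨t, ht, hrt⟩ : ∃ t ∈ range m, r t ^ 3 < R ^ 3 :=
      exists_lt_of_sum_lt (by rwa [sum_const, card_range, nsmul_eq_mul])
    have ht := mem_range.1 ht
    have hrt : r t ≤ R := le_of_pow_le_pow_left₀ three_ne_zero hR hrt.le
    have hprefix : ∑ i ∈ range t, r i ≤ m * R := by
      refine (sum_le_sum_of_subset_of_nonneg (range_subset_range.2 ht.le)
        fun i _ _ => hr i).trans (le_of_pow_le_pow_left₀ three_ne_zero (by positivity) ?_)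
      calc (∑ i ∈ range m, r i) ^ 3 ≤ m ^ 2 * ∑ i ∈ range m, r i ^ 3 := by
            simpa using pow_sum_le_card_mul_sum_pow (s := range m) (fun i _ => hr i) 2
        _ ≤ m ^ 2 * (m * R ^ 3) := by gcongr
        _ = (m * R) ^ 3 := by ring
    have hσ0 : 0 ≤ σ := le_trans (by positivity) hσ
    have hL12 : L ≤ σ / 12 := by nlinarith [(Nat.one_le_cast (α := ℝ)).2 hm]
    have hHt : ‖fderiv ℝ (gradient f) (x t) - B‖ ≤ σ * R / 6 := by
      nlinarith [hH t, mul_le_mul_of_nonneg_left hprefix hL]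
    have hr2 : r t ^ 2 ≤ R ^ 2 := pow_le_pow_left₀ (hr t) hrt 2
    refine ⟨t + 1, by omega, ht, ?_, fun v => ?_⟩
    · have := hLip.norm_gradient_add_le_of_cubic_model hf hσ0 (hmodel t ht)
      nlinarith [hg t ht, mul_le_mul hHt hrt (hr t) (by positivity)]
    · refine le_trans ?_ (hLip.neg_le_inner_fderiv_gradient_add hf hψ (hPSD t ht) v)
      have : (σ + L) * r t + ‖fderiv ℝ (gradient f) (x t) - B‖ ≤ 2 * σ * R := by nlinarith
      nlinarith [sq_nonneg ‖v‖]

end HessianLipschitzWith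

end Block

lemma negEigPart_nonneg {n : ℕ} (F : EuclideanSpace ℝ (Fin n) → ℝ)
    (y : EuclideanSpace ℝ (Fin n)) :
    0 ≤ negEigPart F y :=
  Real.sInf_nonneg fun _ hc => hc.1

lemma negEigPart_le {n : ℕ} {F : EuclideanSpace ℝ (Fin n) → ℝ} {y : EuclideanSpace ℝ (Fin n)}
    {c : ℝ} (hc : 0 ≤ c)
    (h : ∀ v : EuclideanSpace ℝ (Fin n), -(c * ‖v‖ ^ 2) ≤ ⟪fderiv ℝ (gradient F) y v, v⟫) :
    negEigPart F y ≤ c :=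
  csInf_le ⟨0, fun _ hc => hc.1⟩ ⟨hc, h⟩

lemma rpow_div_three_pow_three {x : ℝ} (hx : 0 ≤ x) (a : ℝ) : (x ^ (a / 3)) ^ 3 = x ^ a := by
  rw [← Real.rpow_natCast, ← Real.rpow_mul hx]
  congr 1
  push_cast
  ring

/-- Chosen so that `σ / 27 * stepThreshold σ ε ^ 3 = ε ^ (3 / 2) / (384 * √σ)`, the per-step
decrease of the statement. -/
noncomputable def stepThreshold (σ ε : ℝ) : ℝ := ((9 : ℝ) / 128) ^ ((1 : ℝ) / 3) * √(ε / σ)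

section StepThreshold

variable {σ ε : ℝ}

lemma stepThreshold_nonneg : 0 ≤ stepThreshold σ ε := by
  unfold stepThreshold
  positivity

lemma mul_sq_stepThreshold (hσ : 0 < σ) (hε : 0 ≤ ε) :
    σ * stepThreshold σ ε ^ 2 = (((9 : ℝ) / 128) ^ ((1 : ℝ) / 3)) ^ 2 * ε := by
  rw [stepThreshold, mul_pow, Real.sq_sqrt (div_nonneg hε hσ.le)]
  field_simp

lemma four_mul_mul_sq_stepThreshold_le (hσ : 0 < σ) (hε : 0 ≤ ε) :
    4 * σ * stepThreshold σ ε ^ 2 ≤ ε := by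
  have hk : ((9 : ℝ) / 128) ^ ((1 : ℝ) / 3) ≤ 1 / 2 :=
    le_of_pow_le_pow_left₀ three_ne_zero (by norm_num)
      (by rw [rpow_div_three_pow_three (by norm_num), Real.rpow_one]; norm_num)
  have hk2 := pow_le_pow_left₀ (by positivity) hk 2
  rw [mul_assoc, mul_sq_stepThreshold hσ hε]
  nlinarith

lemma mul_pow_three_stepThreshold (hσ : 0 < σ) (hε : 0 ≤ ε) (m : ℝ) :
    σ / 27 * (m * stepThreshold σ ε ^ 3) = m * ε ^ ((3 : ℝ) / 2) / (2 * 192 * √σ) := by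
  have hε32 : ε ^ ((3 : ℝ) / 2) = √ε ^ 3 := by
    rw [Real.sqrt_eq_rpow, ← Real.rpow_natCast, ← Real.rpow_mul hε]
    norm_num
  have hσs : 0 < √σ := Real.sqrt_pos.2 hσ
  rw [stepThreshold, mul_pow, rpow_div_three_pow_three (by norm_num), Real.rpow_one,
    Real.sqrt_div' _ hσ.le, hε32]
  nth_rewrite 1 [← Real.sq_sqrt hσ.le]
  field_simp
  ring

lemma hessian_error_le_stepThreshold {n L h : ℝ} (hσ : 0 < σ) (hε : 0 < ε) (hn : 0 < n)
    (hL : 0 < L) (hh : 0 ≤ h)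
    (hhle : h ≤ (3 ^ 4 * σ ^ ((3 : ℝ) / 2) * ε ^ ((3 : ℝ) / 2)
      / (2 ^ 14 * 192 * n ^ 3 * L ^ 3)) ^ ((1 : ℝ) / 3)) :
    2 * n * L / 3 * h ≤ 2 * σ * stepThreshold σ ε / 27 := by
  have hs : 0 ≤ √(σ * ε) := Real.sqrt_nonneg _
  have hs3 : σ ^ ((3 : ℝ) / 2) * ε ^ ((3 : ℝ) / 2) = √(σ * ε) ^ 3 := by
    rw [← Real.mul_rpow hσ.le hε.le, Real.sqrt_eq_rpow, ← Real.rpow_natCast,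
      ← Real.rpow_mul (by positivity)]
    norm_num
  have hσR : σ * √(ε / σ) = √(σ * ε) := by
    have : 0 < √σ := Real.sqrt_pos.2 hσ
    rw [Real.sqrt_div' _ hσ.le, Real.sqrt_mul hσ.le]
    field_simp
    rw [Real.sq_sqrt hσ.le]
  have hh3 := pow_le_pow_left₀ hh hhle 3
  rw [rpow_div_three_pow_three (by positivity), Real.rpow_one, mul_assoc, hs3] at hh3
  rw [show 2 * σ * stepThreshold σ ε / 27
      = 2 * ((9 : ℝ) / 128) ^ ((1 : ℝ) / 3) * (σ * √(ε / σ)) / 27 by rw [stepThreshold]; ring, hσR]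
  refine le_of_pow_le_pow_left₀ three_ne_zero (by positivity) ?_
  calc (2 * n * L / 3 * h) ^ 3 = 8 * n ^ 3 * L ^ 3 / 27 * h ^ 3 := by ring
    _ ≤ 8 * n ^ 3 * L ^ 3 / 27 * (3 ^ 4 * √(σ * ε) ^ 3 / (2 ^ 14 * 192 * n ^ 3 * L ^ 3)) := by
      gcongr
    _ = √(σ * ε) ^ 3 / 131072 := by field_simp; ring
    _ ≤ (2 * ((9 : ℝ) / 128) ^ ((1 : ℝ) / 3) * √(σ * ε) / 27) ^ 3 := by
      rw [div_pow, mul_pow, mul_pow, rpow_div_three_pow_three (by norm_num), Real.rpow_one]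
      nlinarith [pow_nonneg hs 3]

lemma gradient_error_le_stepThreshold {n L m hg : ℝ} (hσ : 0 < σ) (hε : 0 < ε) (hn : 0 < n)
    (hL : 0 ≤ L) (hm : 0 ≤ m) (hσm : σ ≥ 2 ^ 4 * ((2 : ℝ) / 3) ^ ((1 : ℝ) / 3) * m * L)
    (hgdef : hg = (3 : ℝ) ^ (-(1 : ℝ) / 3) * (ε * m / (σ * √n)) ^ ((1 : ℝ) / 2)) :
    √n * L / 6 * hg ^ 2 ≤ σ * stepThreshold σ ε ^ 2 / 27 := by
  set c := (3 : ℝ) ^ (-(1 : ℝ) / 3)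
  set β := ((2 : ℝ) / 3) ^ ((1 : ℝ) / 3)
  set k := ((9 : ℝ) / 128) ^ ((1 : ℝ) / 3)
  have hc3 : c ^ 3 = 1 / 3 := by
    rw [rpow_div_three_pow_three (by norm_num), Real.rpow_neg_one, one_div]
  have hβ3 : β ^ 3 = 2 / 3 := by rw [rpow_div_three_pow_three (by norm_num), Real.rpow_one]
  have hk3 : k ^ 3 = 9 / 128 := by rw [rpow_div_three_pow_three (by norm_num), Real.rpow_one]
  have hconst : 27 * c ^ 2 ≤ 96 * β * k ^ 2 := by
    refine le_of_pow_le_pow_left₀ three_ne_zero (by positivity) ?_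
    rw [show (27 * c ^ 2) ^ 3 = 27 ^ 3 * (c ^ 3) ^ 2 by ring,
      show (96 * β * k ^ 2) ^ 3 = 96 ^ 3 * β ^ 3 * (k ^ 3) ^ 2 by ring, hc3, hβ3, hk3]
    norm_num
  have hsn : 0 < √n := Real.sqrt_pos.2 hn
  rw [mul_sq_stepThreshold hσ hε.le, hgdef, mul_pow, ← Real.sqrt_eq_rpow,
    Real.sq_sqrt (by positivity)]
  have h1 := mul_le_mul_of_nonneg_right hconst (by positivity : 0 ≤ m * L * ε)
  have h2 := mul_le_mul_of_nonneg_right hσm (by positivity : 0 ≤ 6 * k ^ 2 * ε)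
  rw [show √n * L / 6 * (c ^ 2 * (ε * m / (σ * √n))) = c ^ 2 * (m * L * ε) / (6 * σ) by
    field_simp, div_le_div_iff₀ (by positivity) (by norm_num)]
  nlinarith

lemma twelve_mul_le_of_sixteen_cbrt_mul_le {m L : ℝ} (hmL : 0 ≤ m * L)
    (hσm : σ ≥ 2 ^ 4 * ((2 : ℝ) / 3) ^ ((1 : ℝ) / 3) * m * L) : 12 * (m * L) ≤ σ := by
  have hβ : 3 / 4 ≤ ((2 : ℝ) / 3) ^ ((1 : ℝ) / 3) :=
    le_of_pow_le_pow_left₀ three_ne_zero (by positivity)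
      (by rw [rpow_div_three_pow_three (by norm_num), Real.rpow_one]; norm_num)
  nlinarith

end StepThreshold

theorem stmt_13_general {n : ℕ}
    (f ψ : EuclideanSpace ℝ (Fin n) → ℝ)
    (L : ℝ) (hL : 0 ≤ L)
    (hf : ContDiff ℝ 2 f)
    (hLip : ∀ u v : EuclideanSpace ℝ (Fin n),
      ‖fderiv ℝ (gradient f) v - fderiv ℝ (gradient f) u‖ ≤ L * ‖v - u‖)
    (hψ2 : ContDiff ℝ 2 ψ)
    (ε : ℝ) (hε : 0 < ε) (m : ℕ) (hm : 1 ≤ m)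
    (x : ℕ → EuclideanSpace ℝ (Fin n))
    (σ h hg : ℝ)
    (hσ : σ ≥ 2 ^ 4 * ((2 : ℝ) / 3) ^ ((1 : ℝ) / 3) * m * L)
    (hh : 0 < h)
    (hhle : h ≤ (3 ^ 4 * σ ^ ((3 : ℝ) / 2) * ε ^ ((3 : ℝ) / 2)
      / (2 ^ 14 * 192 * (n : ℝ) ^ 3 * L ^ 3)) ^ ((1 : ℝ) / 3))
    (hgdef : hg = (3 : ℝ) ^ (-(1 : ℝ) / 3) * (ε * m / (σ * Real.sqrt n)) ^ ((1 : ℝ) / 2))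
    (B : EuclideanSpace ℝ (Fin n) →L[ℝ] EuclideanSpace ℝ (Fin n))
    (hB : ‖B - fderiv ℝ (gradient f) (x 0)‖ ≤ 2 * n * L / 3 * h)
    (g : ℕ → EuclideanSpace ℝ (Fin n))
    (hgapprox : ∀ t < m, ‖g t - gradient f (x t)‖ ≤ Real.sqrt n * L / 6 * hg ^ 2)
    (ψ' : ℕ → EuclideanSpace ℝ (Fin n))
    (hdec : ∀ t < m,
      f (x t) + ⟪g t, x (t + 1) - x t⟫
        + 1 / 2 * ⟪B (x (t + 1) - x t), x (t + 1) - x t⟫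
        + σ / 6 * ‖x (t + 1) - x t‖ ^ 3 + ψ (x (t + 1)) ≤ f (x t) + ψ (x t))
    (hmodel : ∀ t < m,
      ‖g t + B (x (t + 1) - x t)
          + (σ / 2 * ‖x (t + 1) - x t‖) • (x (t + 1) - x t) + ψ' (t + 1)‖ ≤
        σ / 4 * ‖x (t + 1) - x t‖ ^ 2)
    (hPSD : ∀ t < m, ∀ v : EuclideanSpace ℝ (Fin n),
      0 ≤ ⟪B v, v⟫ + σ * ‖x (t + 1) - x t‖ * ‖v‖ ^ 2
        + ⟪fderiv ℝ (gradient ψ) (x (t + 1)) v, v⟫) :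
    (∃ t, 1 ≤ t ∧ t ≤ m ∧
        max ‖gradient f (x t) + ψ' t‖
          (1 / σ * ((2 : ℝ) / 3) ^ ((10 : ℝ) / 3)
            * (negEigPart (fun y => f y + ψ y) (x t)) ^ 2) ≤ ε) ∨
      (f (x 0) + ψ (x 0)) - (f (x m) + ψ (x m)) ≥
        m * ε ^ ((3 : ℝ) / 2) / (2 * 192 * Real.sqrt σ) := by
  -- a vanishing denominator would force `h ≤ 0 ^ (1 / 3) = 0`
  have hnL : (n : ℝ) ^ 3 * L ^ 3 ≠ 0 := fun h0 => by
    rw [show (2 : ℝ) ^ 14 * 192 * (n : ℝ) ^ 3 * L ^ 3 = 2 ^ 14 * 192 * ((n : ℝ) ^ 3 * L ^ 3) by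
      ring, h0, mul_zero, div_zero, Real.zero_rpow (by norm_num)] at hhle
    linarith
  have hn : 0 < (n : ℝ) := (Nat.cast_nonneg n).lt_of_ne' fun h0 => hnL (by simp [h0])
  have hLpos : 0 < L := hL.lt_of_ne' fun h0 => hnL (by simp [h0])
  have hmL : 0 < (m : ℝ) * L := mul_pos (by exact_mod_cast hm) hLpos
  have hσ12 := twelve_mul_le_of_sixteen_cbrt_mul_le hmL.le hσ
  have hσpos : 0 < σ := by linarith
  rcases HessianLipschitzWith.cubic_newton_block hLip hf hψ2 hL hm hσ12 stepThreshold_nonneg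
      (gradient_error_le_stepThreshold hσpos hε hn hL (Nat.cast_nonneg m) hσ hgdef)
      (hessian_error_le_stepThreshold hσpos hε hn hLpos hh.le hhle) hB hgapprox hdec hmodel hPSD
    with ⟨t, ht1, htm, hgrad, hhess⟩ | hdecr
  · have hsmall := four_mul_mul_sq_stepThreshold_le hσpos hε.le
    have hξ := negEigPart_le (mul_nonneg (by positivity) stepThreshold_nonneg) hhess
    refine .inl ⟨t, ht1, htm, max_le (by nlinarith) ?_⟩
    have hξ2 := pow_le_pow_left₀ (negEigPart_nonneg _ _) hξ 2
    have hc : ((2 : ℝ) / 3) ^ ((10 : ℝ) / 3) ≤ 1 :=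
      Real.rpow_le_one (by norm_num) (by norm_num) (by norm_num)
    calc 1 / σ * ((2 : ℝ) / 3) ^ ((10 : ℝ) / 3) * negEigPart (fun y => f y + ψ y) (x t) ^ 2
        ≤ 1 / σ * 1 * (2 * σ * stepThreshold σ ε) ^ 2 := by gcongr
      _ = 4 * σ * stepThreshold σ ε ^ 2 := by field_simp; ring
      _ ≤ ε := hsmall
  · exact .inr (by rwa [ge_iff_le, ← mul_pow_three_stepThreshold hσpos hε.le])

/-- Lemma 10 of the paper: second-order guarantee for a block of `m`
inexact zeroth-order cubic Newton steps, with the extra semidefinite condition on the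
subproblem solutions. -/
theorem stmt_13 {n : ℕ} (hn : 1 ≤ n)
    (f ψ : EuclideanSpace ℝ (Fin n) → ℝ) (Q : Set (EuclideanSpace ℝ (Fin n)))
    (L : ℝ) (hL : 0 ≤ L)
    (hf : ContDiff ℝ 2 f)
    (hLip : ∀ u v : EuclideanSpace ℝ (Fin n),
      ‖fderiv ℝ (gradient f) v - fderiv ℝ (gradient f) u‖ ≤ L * ‖v - u‖)
    (hψ2 : ContDiff ℝ 2 ψ) (hQconv : Convex ℝ Q) (hψconv : ConvexOn ℝ Q ψ)
    (ε : ℝ) (hε : 0 < ε) (m : ℕ) (hm : 1 ≤ m)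
    (x : ℕ → EuclideanSpace ℝ (Fin n)) (hxQ : ∀ t ≤ m, x t ∈ Q)
    (σ h hg : ℝ)
    (hσ : σ ≥ 2 ^ 4 * ((2 : ℝ) / 3) ^ ((1 : ℝ) / 3) * m * L)
    (hh : 0 < h)
    (hhle : h ≤ (3 ^ 4 * σ ^ ((3 : ℝ) / 2) * ε ^ ((3 : ℝ) / 2)
      / (2 ^ 14 * 192 * (n : ℝ) ^ 3 * L ^ 3)) ^ ((1 : ℝ) / 3))
    (hgdef : hg = (3 : ℝ) ^ (-(1 : ℝ) / 3) * (ε * m / (σ * Real.sqrt n)) ^ ((1 : ℝ) / 2))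
    (B : EuclideanSpace ℝ (Fin n) →L[ℝ] EuclideanSpace ℝ (Fin n))
    (hBsym : ∀ u v : EuclideanSpace ℝ (Fin n), ⟪B u, v⟫ = ⟪u, B v⟫)
    (hB : ‖B - fderiv ℝ (gradient f) (x 0)‖ ≤ 2 * n * L / 3 * h)
    (g : ℕ → EuclideanSpace ℝ (Fin n))
    (hgapprox : ∀ t < m, ‖g t - gradient f (x t)‖ ≤ Real.sqrt n * L / 6 * hg ^ 2)
    (ψ' : ℕ → EuclideanSpace ℝ (Fin n))
    (hψ' : ∀ t < m, ∀ y : EuclideanSpace ℝ (Fin n),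
      ψ (x (t + 1)) + ⟪ψ' (t + 1), y - x (t + 1)⟫ ≤ ψ y)
    (hdec : ∀ t < m,
      f (x t) + ⟪g t, x (t + 1) - x t⟫
        + 1 / 2 * ⟪B (x (t + 1) - x t), x (t + 1) - x t⟫
        + σ / 6 * ‖x (t + 1) - x t‖ ^ 3 + ψ (x (t + 1)) ≤ f (x t) + ψ (x t))
    (hmodel : ∀ t < m,
      ‖g t + B (x (t + 1) - x t)
          + (σ / 2 * ‖x (t + 1) - x t‖) • (x (t + 1) - x t) + ψ' (t + 1)‖ ≤
        σ / 4 * ‖x (t + 1) - x t‖ ^ 2)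
    (hPSD : ∀ t < m, ∀ v : EuclideanSpace ℝ (Fin n),
      0 ≤ ⟪B v, v⟫ + σ * ‖x (t + 1) - x t‖ * ‖v‖ ^ 2
        + ⟪fderiv ℝ (gradient ψ) (x (t + 1)) v, v⟫) :
    (∃ t, 1 ≤ t ∧ t ≤ m ∧
        max ‖gradient f (x t) + ψ' t‖
          (1 / σ * ((2 : ℝ) / 3) ^ ((10 : ℝ) / 3)
            * (negEigPart (fun y => f y + ψ y) (x t)) ^ 2) ≤ ε) ∨
      (f (x 0) + ψ (x 0)) - (f (x m) + ψ (x m)) ≥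
        m * ε ^ ((3 : ℝ) / 2) / (2 * 192 * Real.sqrt σ) :=
  stmt_13_general f ψ L hL hf hLip hψ2 ε hε m hm x σ h hg hσ hh hhle hgdef B hB g hgapprox ψ' hdec
    hmodel hPSD
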